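/- (Theorem 2, high significance.) Fix a critical value c and p ∈ (0, 1). Then the conditional quantile converges to the conventional one as the observed statistic grows: for every ξ > 0 there exists M ∈ ℝ such that for every x > M and every θ ∈ ℝ satisfying F(x; θ, c) = p, one has |θ − (x − Φ⁻¹(p))| ≤ ξ, where Φ⁻¹ is the inverse of the standard normal CDF. -/

import Mathlib

open Filter Set

/-- The standard normal CDF `Φ(t) = (2π)^{−1/2} ∫_{−∞}^t exp(−s²/2) ds`. -/
noncomputable def Phi (t : ℝ) : ℝ :=
  (Real.sqrt (2 * Real.pi))⁻¹ * ∫ s in Set.Iic t, Real.exp (-(s ^ 2) / 2)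

/-- The truncated-normal distribution function
    `F(a; θ, c) := (Φ(a − θ) − Φ(c − θ)) / (1 − Φ(c − θ))`. -/
noncomputable def F (a θ c : ℝ) : ℝ :=
  (Phi (a - θ) - Phi (c - θ)) / (1 - Phi (c - θ))

/-- The inverse of the standard normal CDF on `(0,1)`. -/
noncomputable def PhiInv : ℝ → ℝ := Function.invFun Phi

/-!
Write `u = x − θ`, `v = c − θ`, `s = x − c`. The equation `F(x; θ, c) = p` says
`Φ(u) = p + (1 − p) Φ(v)`, so `u > Φ⁻¹(p)` always. Equivalently `1 − Φ(u) = (1 − p)(1 − Φ(v))`,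
and the Gaussian tail bound `1 − Φ(v + s) ≤ e^{−vs − s²/2} (1 − Φ(v))` then forces
`e^{−vs − s²/2} ≥ 1 − p`: as `s → ∞` this drives `v → −∞` uniformly in `θ`, hence `Φ(v) → 0`,
`Φ(u) → p` and `u → Φ⁻¹(p)`.
-/

open MeasureTheory ProbabilityTheory Topology Real

local notation "φ" => gaussianPDFReal 0 1

lemma Phi_eq_integral (t : ℝ) : Phi t = ∫ s in Iic t, φ s := by
  simp only [Phi, gaussianPDFReal, ← integral_const_mul]
  norm_num

lemma setIntegral_gaussianPDFReal_pos (μ : ℝ) {v : NNReal} (hv : v ≠ 0) {s : Set ℝ}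
    (hs : 0 < volume s) : 0 < ∫ x in s, gaussianPDFReal μ v x := by
  rw [setIntegral_pos_iff_support_of_nonneg_ae
    (ae_of_all _ (gaussianPDFReal_nonneg μ v)) (integrable_gaussianPDFReal μ v).integrableOn]
  have : Function.support (gaussianPDFReal μ v) = univ :=
    eq_univ_of_forall fun x => (gaussianPDFReal_pos μ v x hv).ne'
  rwa [this, univ_inter]

lemma one_sub_Phi (t : ℝ) : 1 - Phi t = ∫ s in Ioi t, φ s := by
  have h := intervalIntegral.integral_Iic_add_Ioi (b := t) (μ := volume)
    (integrable_gaussianPDFReal 0 1).integrableOn (integrable_gaussianPDFReal 0 1).integrableOn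
  rw [integral_gaussianPDFReal_eq_one 0 one_ne_zero] at h
  rw [Phi_eq_integral]
  linarith

lemma Phi_pos (t : ℝ) : 0 < Phi t :=
  Phi_eq_integral t ▸ setIntegral_gaussianPDFReal_pos 0 one_ne_zero (by simp)

lemma Phi_lt_one (t : ℝ) : Phi t < 1 :=
  sub_pos.mp <| one_sub_Phi t ▸ setIntegral_gaussianPDFReal_pos 0 one_ne_zero (by simp)

lemma strictMono_Phi : StrictMono Phi := by
  intro a b hab
  have h := intervalIntegral.integral_Iic_sub_Iic (a := a) (b := b) (μ := volume)
    (integrable_gaussianPDFReal 0 1).integrableOn (integrable_gaussianPDFReal 0 1).integrableOn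
  rw [intervalIntegral.integral_of_le hab.le] at h
  have := setIntegral_gaussianPDFReal_pos 0 one_ne_zero (s := Ioc a b) (by simpa using hab)
  rw [Phi_eq_integral, Phi_eq_integral]
  linarith

lemma continuous_Phi : Continuous Phi := by
  have h (t : ℝ) : Phi t = Phi 0 + ∫ s in (0 : ℝ)..t, φ s := by
    have := intervalIntegral.integral_Iic_sub_Iic (a := 0) (b := t) (μ := volume)
      (integrable_gaussianPDFReal 0 1).integrableOn (integrable_gaussianPDFReal 0 1).integrableOn
    rw [Phi_eq_integral, Phi_eq_integral]
    linarith
  rw [funext h]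
  exact continuous_const.add ((integrable_gaussianPDFReal 0 1).continuous_primitive 0)

lemma tendsto_Phi_atTop : Tendsto Phi atTop (𝓝 1) := by
  have := (aecover_Iic tendsto_id).integral_tendsto_of_countably_generated
    (integrable_gaussianPDFReal 0 1)
  rw [integral_gaussianPDFReal_eq_one 0 one_ne_zero] at this
  simpa only [id, ← Phi_eq_integral] using this

lemma tendsto_Phi_atBot : Tendsto Phi atBot (𝓝 0) := by
  have := (aecover_Ioi tendsto_id).integral_tendsto_of_countably_generated
    (integrable_gaussianPDFReal 0 1)
  rw [integral_gaussianPDFReal_eq_one 0 one_ne_zero] at this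
  simpa only [id, ← one_sub_Phi, sub_sub_cancel, sub_self] using this.const_sub 1

lemma Phi_PhiInv {p : ℝ} (hp : p ∈ Ioo (0 : ℝ) 1) : Phi (PhiInv p) = p := by
  refine Function.invFun_eq (mem_range_of_exists_le_of_exists_ge continuous_Phi ?_ ?_)
  · exact ((tendsto_Phi_atBot.eventually (eventually_lt_nhds hp.1)).exists).imp fun _ => le_of_lt
  · exact ((tendsto_Phi_atTop.eventually (eventually_gt_nhds hp.2)).exists).imp fun _ => le_of_lt

lemma gaussianPDFReal_zero_one_add (x s : ℝ) : φ (x + s) = exp (-(x * s) - s ^ 2 / 2) * φ x := by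
  simp only [gaussianPDFReal]
  rw [mul_left_comm, ← exp_add]
  congr 2
  push_cast
  ring

lemma one_sub_Phi_add_le (t : ℝ) {s : ℝ} (hs : 0 ≤ s) :
    1 - Phi (t + s) ≤ exp (-(t * s) - s ^ 2 / 2) * (1 - Phi t) := by
  have hshift : MeasurePreserving (· + s) volume volume := measurePreserving_add_right volume s
  have hemb : MeasurableEmbedding (· + s) := (Homeomorph.addRight s).measurableEmbedding
  have hsub : ∫ x in Ioi (t + s), φ x = ∫ x in Ioi t, φ (x + s) := by
    rw [← hshift.setIntegral_preimage_emb hemb, preimage_add_const_Ioi, add_sub_cancel_right]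
  rw [one_sub_Phi, one_sub_Phi, hsub, ← integral_const_mul]
  refine setIntegral_mono_on ((hshift.integrable_comp_emb hemb).mpr
    (integrable_gaussianPDFReal 0 1)).integrableOn
    ((integrable_gaussianPDFReal 0 1).const_mul _).integrableOn measurableSet_Ioi fun x hx => ?_
  rw [gaussianPDFReal_zero_one_add]
  gcongr
  · exact gaussianPDFReal_nonneg 0 1 x
  · exact le_of_lt hx

lemma F_eq_iff {a θ c p : ℝ} : F a θ c = p ↔ Phi (a - θ) = p + (1 - p) * Phi (c - θ) := by
  rw [F, div_eq_iff (sub_pos.mpr (Phi_lt_one _)).ne']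
  constructor <;> intro h <;> linarith

lemma PhiInv_lt_sub_of_F_eq {a θ c p : ℝ} (hp : p ∈ Ioo (0 : ℝ) 1) (h : F a θ c = p) :
    PhiInv p < a - θ := by
  refine strictMono_Phi.lt_iff_lt.mp ?_
  rw [Phi_PhiInv hp, F_eq_iff.mp h]
  have := mul_pos (sub_pos.mpr hp.2) (Phi_pos (c - θ))
  linarith

lemma eventually_sub_lt_of_F_eq {p : ℝ} (hp : p < 1) (c K : ℝ) :
    ∀ᶠ a in atTop, ∀ θ, F a θ c = p → c - θ < K := by
  have hexp : Tendsto (fun a => exp (-(K * (a - c)) - (a - c) ^ 2 / 2)) atTop (𝓝 0) := by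
    have hs : Tendsto (fun a : ℝ => a - c) atTop atTop := by
      simpa only [sub_eq_add_neg, id] using tendsto_atTop_add_const_right atTop (-c) tendsto_id
    have hquad : Tendsto (fun s : ℝ => s * (s / 2 + K)) atTop atTop :=
      tendsto_id.atTop_mul_atTop₀
        (tendsto_atTop_add_const_right _ K (tendsto_id.atTop_div_const two_pos))
    refine (tendsto_exp_atBot.comp (tendsto_neg_atTop_atBot.comp (hquad.comp hs))).congr
      fun a => ?_
    simp only [Function.comp_apply]
    ring_nf
  filter_upwards [hexp.eventually (eventually_lt_nhds (sub_pos.mpr hp)), eventually_ge_atTop c]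
    with a ha hca θ hF
  by_contra! hK
  have htail : 1 - Phi (a - θ) = (1 - p) * (1 - Phi (c - θ)) := by
    rw [F_eq_iff.mp hF]; ring
  have hpos : 0 < 1 - Phi (c - θ) := sub_pos.mpr (Phi_lt_one _)
  have hshift := one_sub_Phi_add_le (c - θ) (sub_nonneg.mpr hca)
  rw [sub_add_sub_cancel', htail] at hshift
  refine lt_irrefl ((1 - p) * (1 - Phi (c - θ))) ?_
  calc (1 - p) * (1 - Phi (c - θ))
      ≤ exp (-((c - θ) * (a - c)) - (a - c) ^ 2 / 2) * (1 - Phi (c - θ)) := hshift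
    _ ≤ exp (-(K * (a - c)) - (a - c) ^ 2 / 2) * (1 - Phi (c - θ)) := by gcongr
    _ < (1 - p) * (1 - Phi (c - θ)) := by gcongr

/-- (Theorem 2, high significance.) Fix `c` and `p ∈ (0,1)`. For every `ξ > 0`
there exists `M` such that for every `x > M` and every `θ` with `F(x; θ, c) = p`,
one has `|θ − (x − Φ⁻¹(p))| ≤ ξ`. -/
theorem stmt_5 (c p : ℝ) (hp : p ∈ Set.Ioo (0 : ℝ) 1) :
    ∀ ξ > (0 : ℝ), ∃ M : ℝ, ∀ x : ℝ, M < x →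
      ∀ θ : ℝ, F x θ c = p → |θ - (x - PhiInv p)| ≤ ξ := by
  intro ξ hξ
  set q := Phi (PhiInv p + ξ)
  have hpq : p < q := Phi_PhiInv hp ▸ strictMono_Phi (lt_add_of_pos_right _ hξ)
  have hp1 : 0 < 1 - p := sub_pos.mpr hp.2
  obtain ⟨K, hK⟩ := (tendsto_Phi_atBot.eventually
    (eventually_lt_nhds (div_pos (sub_pos.mpr hpq) hp1))).exists_forall_of_atBot
  obtain ⟨M, hM⟩ := (eventually_sub_lt_of_F_eq hp.2 c K).exists_forall_of_atTop
  refine ⟨M, fun x hx θ hF => abs_le.mpr ⟨?_, ?_⟩⟩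
  · have hv := (lt_div_iff₀' hp1).mp (hK (c - θ) (hM x hx.le θ hF).le)
    have : Phi (x - θ) < q := by linarith [F_eq_iff.mp hF]
    linarith [strictMono_Phi.lt_iff_lt.mp this]
  · linarith [PhiInv_lt_sub_of_F_eq hp hF]
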